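/- arXiv:2302.10183 — 8 statements merged into one kernel-verified Lean document; each statement's English description precedes it below -/
import Mathlib

section
/- For the paired exponential utility U, the convex conjugate V(w) := sup_{x ∈ ℝᴺ}(U(x) - ∑ⱼ xʲwʲ) is, for w ∈ (0,∞)ᴺ, given by V(w) = N²/2 + ∑ⱼ (wʲ/αⱼ) log(wʲ/αⱼ) - (1/2)[∑ⱼ wʲ/αⱼ + (∑ⱼ wʲ/αⱼ) log(∑ⱼ wʲ/αⱼ)]. -/
open Real Finset

theorem paired_exp_conjugate_formula (N : ℕ) (hN : 1 ≤ N)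
    (α : Fin N → ℝ) (hα : ∀ n, 0 < α n)
    (U : (Fin N → ℝ) → ℝ)
    (hU : ∀ x, U x = (N : ℝ)^2 / 2 - (1/2) * (∑ n, exp (-(α n * x n)))^2)
    (V : (Fin N → ℝ) → ℝ)
    (hV : ∀ w, V w = ⨆ x : Fin N → ℝ, (U x - ∑ j, x j * w j))
    (w : Fin N → ℝ) (hw : ∀ j, 0 < w j) :
    V w = (N : ℝ)^2 / 2 + ∑ j, (w j / α j) * log (w j / α j)
      - (1/2) * (∑ j, w j / α j + (∑ j, w j / α j) * log (∑ j, w j / α j)) := by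
  have hNE : Nonempty (Fin N) := ⟨⟨0, hN⟩⟩
  set b : Fin N → ℝ := fun j => w j / α j with hb
  have hbpos : ∀ j, 0 < b j := fun j => div_pos (hw j) (hα j)
  have hwb : ∀ j, w j = α j * b j := fun j => by
    simp only [hb]; rw [mul_comm, div_mul_cancel₀ _ (hα j).ne']
  set T : ℝ := ∑ j, b j with hT
  have hTpos : 0 < T := Finset.sum_pos (fun j _ => hbpos j) Finset.univ_nonempty
  set c : ℝ := Real.sqrt T with hc
  have hcpos : 0 < c := Real.sqrt_pos.mpr hTpos
  have hc2 : c ^ 2 = T := Real.sq_sqrt hTpos.le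
  have hlogc : Real.log c = Real.log T / 2 := Real.log_sqrt hTpos.le
  have hTlogc : T * Real.log c = T * Real.log T / 2 := by rw [hlogc]; ring
  set C : ℝ := (N : ℝ)^2 / 2 + ∑ j, b j * log (b j)
      - (1/2) * (T + T * log T) with hC
  -- Upper bound
  have hub : ∀ x : Fin N → ℝ, U x - ∑ j, x j * w j ≤ C := by
    intro x
    have hterm : ∀ j, -(x j * w j) ≤ b j * log (b j) - b j * log c - b j
        + c * exp (-(α j * x j)) := by
      intro j
      have h1 := Real.add_one_le_exp (-(α j * x j) + log c - log (b j))
      have he : exp (-(α j * x j) + log c - log (b j))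
          = exp (-(α j * x j)) * c / b j := by
        rw [show -(α j * x j) + log c - log (b j)
            = -(α j * x j) + (log c - log (b j)) by ring,
          Real.exp_add, Real.exp_sub, Real.exp_log hcpos, Real.exp_log (hbpos j)]
        ring
      rw [he] at h1
      have h2 := mul_le_mul_of_nonneg_left h1 (hbpos j).le
      have h3 : b j * (exp (-(α j * x j)) * c / b j)
          = c * exp (-(α j * x j)) := by
        rw [mul_div_assoc']
        rw [show b j * (exp (-(α j * x j)) * c)
            = b j * (c * exp (-(α j * x j))) by ring]
        exact mul_div_cancel_left₀ _ (hbpos j).ne'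
      rw [h3] at h2
      have hex : b j * (-(α j * x j) + log c - log (b j) + 1)
          = -(x j * w j) + b j * log c - b j * log (b j) + b j := by
        rw [hwb j]; ring
      linarith [h2, hex.ge, hex.le]
    have hsum : -(∑ j, x j * w j) ≤ ∑ j, b j * log (b j) - T * log c - T
        + c * ∑ j, exp (-(α j * x j)) := by
      calc -(∑ j, x j * w j) = ∑ j, -(x j * w j) := by
              rw [Finset.sum_neg_distrib]
        _ ≤ ∑ j, (b j * log (b j) - b j * log c - b j + c * exp (-(α j * x j))) :=
              Finset.sum_le_sum (fun j _ => hterm j)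
        _ = ∑ j, b j * log (b j) - T * log c - T
              + c * ∑ j, exp (-(α j * x j)) := by
              rw [Finset.sum_add_distrib, Finset.sum_sub_distrib,
                Finset.sum_sub_distrib, ← Finset.sum_mul, ← Finset.mul_sum]
    rw [hU x]
    set S : ℝ := ∑ j, exp (-(α j * x j)) with hS
    have hsq : (S - c) ^ 2 ≥ 0 := sq_nonneg _
    simp only [hC]
    nlinarith [hsum, hsq, hc2, hTlogc]
  -- Attainment
  have hx : ∃ x : Fin N → ℝ, U x - ∑ j, x j * w j = C := by
    refine ⟨fun j => (log c - log (b j)) / α j, ?_⟩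
    have hexp : ∀ j, exp (-(α j * ((log c - log (b j)) / α j))) = b j / c := by
      intro j
      have : -(α j * ((log c - log (b j)) / α j)) = log (b j) - log c := by
        rw [show -(α j * ((log c - log (b j)) / α j))
            = α j * (log (b j) - log c) / α j by ring]
        exact mul_div_cancel_left₀ _ (hα j).ne'
      rw [this, Real.exp_sub, Real.exp_log hcpos, Real.exp_log (hbpos j)]
    have hSstar : (∑ j, exp (-(α j * ((log c - log (b j)) / α j)))) = c := by
      simp only [hexp]
      rw [← Finset.sum_div, ← hT, div_eq_iff hcpos.ne', ← hc2]
      ring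
    have hsumw : (∑ j, ((log c - log (b j)) / α j) * w j)
        = T * log c - ∑ j, b j * log (b j) := by
      have : ∀ j, ((log c - log (b j)) / α j) * w j
          = b j * log c - b j * log (b j) := by
        intro j
        calc ((log c - log (b j)) / α j) * w j
            = α j * ((log c - log (b j)) * b j) / α j := by rw [hwb j]; ring
          _ = (log c - log (b j)) * b j := mul_div_cancel_left₀ _ (hα j).ne'
          _ = b j * log c - b j * log (b j) := by ring
      rw [Finset.sum_congr rfl (fun j _ => this j), Finset.sum_sub_distrib,
        ← Finset.sum_mul, ← hT]
    rw [hU, hSstar, hsumw, hC]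
    nlinarith [hc2, hTlogc]
  -- Conclude
  rw [hV w]
  have hbdd : BddAbove (Set.range fun x : Fin N → ℝ => U x - ∑ j, x j * w j) := by
    refine ⟨C, ?_⟩
    rintro y ⟨x, rfl⟩
    exact hub x
  obtain ⟨x0, hx0⟩ := hx
  refine le_antisymm (ciSup_le hub) ?_
  calc C = U x0 - ∑ j, x0 j * w j := hx0.symm
    _ ≤ ⨆ x : Fin N → ℝ, (U x - ∑ j, x j * w j) := le_ciSup hbdd x0
end

section
/- For the paired exponential utility, the supremum defining V(w) for w ∈ (0,∞)ᴺ is attained at the point x* defined by -αⱼx*ʲ = log(wʲ/αⱼ) - (1/2)log(∑ᵢ wⁱ/αᵢ), i.e., x* satisfies wʲ = αⱼ e^{-αⱼx*ʲ} ∑ᵢ e^{-αᵢx*ⁱ} for all j. -/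
open Real Finset

theorem paired_exp_conjugate_attained (N : ℕ) (hN : 1 ≤ N)
    (α : Fin N → ℝ) (hα : ∀ n, 0 < α n)
    (U : (Fin N → ℝ) → ℝ)
    (hU : ∀ x, U x = (N : ℝ)^2 / 2 - (1/2) * (∑ n, exp (-(α n * x n)))^2)
    (w : Fin N → ℝ) (hw : ∀ j, 0 < w j)
    (xstar : Fin N → ℝ)
    (hxstar : ∀ j, -(α j * xstar j) = log (w j / α j) - (1/2) * log (∑ i, w i / α i)) :
    (∀ j, w j = α j * exp (-(α j * xstar j)) * ∑ i, exp (-(α i * xstar i))) ∧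
    (∀ x : Fin N → ℝ, U x - ∑ j, x j * w j ≤ U xstar - ∑ j, xstar j * w j) := by
  have hNe : Nonempty (Fin N) := ⟨⟨0, hN⟩⟩
  set c : Fin N → ℝ := fun j => w j / α j with hc
  have hcpos : ∀ j, 0 < c j := fun j => div_pos (hw j) (hα j)
  set s : ℝ := ∑ i, c i with hs
  have hspos : 0 < s := Finset.sum_pos (fun i _ => hcpos i) univ_nonempty
  have hsqrt : 0 < Real.sqrt s := Real.sqrt_pos.2 hspos
  have hsq : Real.sqrt s * Real.sqrt s = s := Real.mul_self_sqrt hspos.le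
  have hE : ∀ j, exp (-(α j * xstar j)) = c j / Real.sqrt s := by
    intro j
    rw [hxstar j, Real.exp_sub, Real.exp_log (hcpos j)]
    congr 1
    rw [show (1/2 : ℝ) * Real.log s = Real.log (Real.sqrt s) by
      rw [Real.log_sqrt hspos.le]; ring, Real.exp_log hsqrt]
  have hsumE : (∑ i, exp (-(α i * xstar i))) = Real.sqrt s := by
    simp only [hE]
    rw [← Finset.sum_div, ← hs, div_eq_iff hsqrt.ne']
    exact hsq.symm
  constructor
  · intro j
    rw [hE j, hsumE, mul_assoc, div_mul_cancel₀ _ hsqrt.ne', hc]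
    rw [mul_comm (α j) (w j / α j), div_mul_cancel₀ _ (hα j).ne']
  · intro x
    have hy : ∀ j, (0:ℝ) < exp (-(α j * x j)) := fun j => Real.exp_pos _
    have hEpos : ∀ j, (0:ℝ) < exp (-(α j * xstar j)) := fun j => Real.exp_pos _
    -- rewrite x j * w j as -(c j * log (exp ...))
    have hxw : ∀ j, x j * w j = -(c j * Real.log (exp (-(α j * x j)))) := by
      intro j
      rw [Real.log_exp, hc]
      field_simp [(hα j).ne']
    have hxsw : ∀ j, xstar j * w j = -(c j * Real.log (exp (-(α j * xstar j)))) := by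
      intro j
      rw [Real.log_exp, hc]
      field_simp [(hα j).ne']
    -- key pointwise inequality
    have hkey : ∀ j, c j * Real.log (exp (-(α j * x j))) ≤
        c j * Real.log (exp (-(α j * xstar j))) +
          (Real.sqrt s * exp (-(α j * x j)) - c j) := by
      intro j
      have h1 : Real.log (exp (-(α j * x j)) / exp (-(α j * xstar j))) ≤
          exp (-(α j * x j)) / exp (-(α j * xstar j)) - 1 :=
        Real.log_le_sub_one_of_pos (div_pos (hy j) (hEpos j))
      rw [Real.log_div (hy j).ne' (hEpos j).ne'] at h1
      have h2 : c j / exp (-(α j * xstar j)) = Real.sqrt s := by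
        rw [hE j, div_div_eq_mul_div, mul_comm, mul_div_assoc,
          div_self (hcpos j).ne', mul_one]
      have h3 : c j * (exp (-(α j * x j)) / exp (-(α j * xstar j))) =
          Real.sqrt s * exp (-(α j * x j)) := by
        rw [show c j * (exp (-(α j * x j)) / exp (-(α j * xstar j))) =
          c j / exp (-(α j * xstar j)) * exp (-(α j * x j)) by ring, h2]
      nlinarith [mul_le_mul_of_nonneg_left h1 (hcpos j).le, hcpos j]
    have hsumkey : ∑ j, c j * Real.log (exp (-(α j * x j))) ≤
        (∑ j, c j * Real.log (exp (-(α j * xstar j)))) +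
          (Real.sqrt s * (∑ j, exp (-(α j * x j))) - s) := by
      calc ∑ j, c j * Real.log (exp (-(α j * x j)))
          ≤ ∑ j, (c j * Real.log (exp (-(α j * xstar j))) +
              (Real.sqrt s * exp (-(α j * x j)) - c j)) :=
            Finset.sum_le_sum (fun j _ => hkey j)
        _ = _ := by rw [Finset.sum_add_distrib, Finset.sum_sub_distrib, Finset.mul_sum, hs]
    rw [hU x, hU xstar, hsumE]
    simp only [hxw, hxsw]
    simp only [Finset.sum_neg_distrib]
    have hsq2 : Real.sqrt s ^ 2 = s := Real.sq_sqrt hspos.le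
    have hT : (0:ℝ) ≤ (∑ j, exp (-(α j * x j)) - Real.sqrt s)^2 := sq_nonneg _
    nlinarith [hsumkey, hsq, hsq2, hT]
end

section
/- For the paired exponential utility with conjugate V, at a diagonal point (z,…,z) with z > 0 one has V(z,…,z) = N²/2 + βz log z + zΓ - (1/2)(zβ + βz log z + zβ log β), where β = ∑ⱼ 1/αⱼ and Γ = ∑ⱼ (1/αⱼ) log(1/αⱼ). -/
open Real Finset

theorem paired_exp_conjugate_diagonal (N : ℕ) (hN : 1 ≤ N)
    (α : Fin N → ℝ) (hα : ∀ n, 0 < α n)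
    (U : (Fin N → ℝ) → ℝ)
    (hU : ∀ x, U x = (N : ℝ)^2 / 2 - (1/2) * (∑ n, exp (-(α n * x n)))^2)
    (V : (Fin N → ℝ) → ℝ)
    (hV : ∀ w, V w = ⨆ x : Fin N → ℝ, (U x - ∑ j, x j * w j))
    (β Γ : ℝ) (hβ : β = ∑ j, 1 / α j) (hΓ : Γ = ∑ j, (1 / α j) * log (1 / α j))
    (z : ℝ) (hz : 0 < z) :
    V (fun _ => z) =
      (N : ℝ)^2 / 2 + β * z * log z + z * Γ
        - (1/2) * (z * β + β * z * log z + z * β * log β) := by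
  have hNe : Nonempty (Fin N) := Fin.pos_iff_nonempty.mp hN
  have huniv : (univ : Finset (Fin N)).Nonempty := univ_nonempty
  have hβpos : 0 < β := by
    rw [hβ]; exact Finset.sum_pos (fun j _ => one_div_pos.mpr (hα j)) huniv
  set S : ℝ := Real.sqrt (z * β) with hSdef
  have hzβ : 0 < z * β := mul_pos hz hβpos
  have hSpos : 0 < S := Real.sqrt_pos.mpr hzβ
  have hS2 : S ^ 2 = z * β := Real.sq_sqrt hzβ.le
  have hlogS : log S = (log z + log β) / 2 := by
    rw [hSdef, Real.log_sqrt hzβ.le, Real.log_mul hz.ne' hβpos.ne']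
  set s : Fin N → ℝ := fun j => z / (α j * S) with hsdef
  have hspos : ∀ j, 0 < s j := fun j => div_pos hz (mul_pos (hα j) hSpos)
  have hsum_s : ∑ j, s j = S := by
    have h1 : ∑ j, s j = (z / S) * ∑ j, 1 / α j := by
      rw [Finset.mul_sum]
      refine Finset.sum_congr rfl (fun j _ => ?_)
      rw [hsdef]
      simp only
      rw [mul_comm (α j) S, ← div_div, div_eq_mul_one_div]
    rw [h1, ← hβ, div_mul_eq_mul_div, eq_comm, eq_div_iff hSpos.ne', ← hS2]
    ring
  set L : ℝ := ∑ j, (z / α j) * log (s j) with hLdef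
  have hlogs : ∀ j, log (s j) = log z + log (1 / α j) - log S := by
    intro j
    rw [hsdef]
    simp only
    rw [Real.log_div hz.ne' (mul_pos (hα j) hSpos).ne',
      Real.log_mul (hα j).ne' hSpos.ne', one_div, Real.log_inv]
    ring
  have hL : L = z * log z * β + z * Γ - z * log S * β := by
    rw [hLdef, hβ, hΓ, Finset.mul_sum, Finset.mul_sum, Finset.mul_sum,
      ← Finset.sum_add_distrib, ← Finset.sum_sub_distrib]
    refine Finset.sum_congr rfl (fun j _ => ?_)
    rw [hlogs j]
    have := (hα j).ne'
    field_simp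
  set c : ℝ := (N : ℝ) ^ 2 / 2 + L - z * β / 2 with hcdef
  -- upper bound
  have key : ∀ x : Fin N → ℝ, U x - ∑ j, x j * z ≤ c := by
    intro x
    set t : Fin N → ℝ := fun j => exp (-(α j * x j)) with htdef
    have htpos : ∀ j, 0 < t j := fun j => exp_pos _
    have hx : ∀ j, x j * z = -((z / α j) * log (t j)) := by
      intro j
      rw [htdef]
      simp only [Real.log_exp]
      have := (hα j).ne'
      field_simp
    have hsum_le : ∑ j, (z / α j) * log (t j) ≤ L + S * (∑ j, t j) - z * β := by
      have h2 : ∀ j, (z / α j) * log (t j) ≤ (z / α j) * log (s j) + S * t j - z / α j := by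
        intro j
        have h1 : log (t j / s j) ≤ t j / s j - 1 :=
          Real.log_le_sub_one_of_pos (div_pos (htpos j) (hspos j))
        rw [Real.log_div (htpos j).ne' (hspos j).ne'] at h1
        have hc2 : (z / α j) * (t j / s j) = S * t j := by
          have ha := (hα j).ne'
          have hzn := hz.ne'
          rw [hsdef]
          field_simp
        have hza : 0 < z / α j := div_pos hz (hα j)
        nlinarith [mul_le_mul_of_nonneg_left h1 hza.le]
      calc ∑ j, (z / α j) * log (t j)
          ≤ ∑ j, ((z / α j) * log (s j) + S * t j - z / α j) :=
            Finset.sum_le_sum (fun j _ => h2 j)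
        _ = L + S * (∑ j, t j) - z * β := by
            rw [Finset.sum_sub_distrib, Finset.sum_add_distrib, ← Finset.mul_sum, hβ,
              Finset.mul_sum, hLdef]
            congr 1
            rw [Finset.mul_sum]
            refine Finset.sum_congr rfl (fun j _ => ?_)
            rw [one_div, div_eq_mul_inv]
    have hxsum : ∑ j, x j * z = -∑ j, (z / α j) * log (t j) := by
      rw [← Finset.sum_neg_distrib]
      exact Finset.sum_congr rfl (fun j _ => hx j)
    rw [hU x, hxsum, hcdef]
    set T : ℝ := ∑ j, t j with hTdef
    nlinarith [sq_nonneg (T - S), hsum_le, hS2]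
  -- attained
  set xstar : Fin N → ℝ := fun j => -(log (s j)) / α j with hxstar
  have hatt : U xstar - ∑ j, xstar j * z = c := by
    have hexp : ∀ j, exp (-(α j * xstar j)) = s j := by
      intro j
      rw [hxstar]
      simp only
      rw [show -(α j * (-(log (s j)) / α j)) = log (s j) by
        rw [neg_div, mul_neg, neg_neg, mul_comm, div_mul_cancel₀ _ (hα j).ne']]
      exact Real.exp_log (hspos j)
    have hxs : ∑ j, xstar j * z = -L := by
      rw [hLdef, ← Finset.sum_neg_distrib]
      refine Finset.sum_congr rfl (fun j _ => ?_)
      rw [hxstar]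
      simp only
      ring
    have hUx : U xstar = (N : ℝ) ^ 2 / 2 - (1 / 2) * S ^ 2 := by
      have hsum : (∑ n, exp (-(α n * xstar n))) = S := by
        rw [← hsum_s]
        exact Finset.sum_congr rfl (fun j _ => hexp j)
      rw [hU, hsum]
    rw [hUx, hxs, hcdef, hS2]
    ring
  have hVal : V (fun _ => z) = c := by
    rw [hV]
    have hbdd : BddAbove (Set.range fun x : Fin N → ℝ => U x - ∑ j, x j * z) := by
      refine ⟨c, ?_⟩
      rintro _ ⟨x, rfl⟩
      exact key x
    refine le_antisymm (ciSup_le key) ?_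
    calc c = U xstar - ∑ j, xstar j * z := hatt.symm
      _ ≤ _ := le_ciSup hbdd xstar
  rw [hVal, hcdef, hL, hlogS]
  ring
end

section
/- For the paired exponential utility U and ε ≥ 0, one has the pointwise bound U(x - ε·𝟏) ≥ (1 - exp(2 max_n αₙ ε)) · N²/2 + exp(2 max_n αₙ ε) · U(x) for all x ∈ ℝᴺ. -/
open Real Finset

theorem paired_exp_utility_shift_bound (N : ℕ) (hN : 1 ≤ N)
    (α : Fin N → ℝ) (hα : ∀ n, 0 < α n)
    (U : (Fin N → ℝ) → ℝ)
    (hU : ∀ x, U x = (N : ℝ)^2 / 2 - (1/2) * (∑ n, exp (-(α n * x n)))^2)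
    (M : ℝ) (hMub : ∀ n, α n ≤ M) (hMmem : ∃ n, α n = M)
    (ε : ℝ) (hε : 0 ≤ ε) (x : Fin N → ℝ) :
    (1 - exp (2 * M * ε)) * (N : ℝ)^2 / 2 + exp (2 * M * ε) * U x
      ≤ U (fun n => x n - ε) := by
  rw [hU x, hU (fun n => x n - ε)]
  set S : ℝ := ∑ n, exp (-(α n * x n)) with hS
  set S' : ℝ := ∑ n, exp (-(α n * (x n - ε))) with hS'
  have hSnn : 0 ≤ S := Finset.sum_nonneg fun n _ => (exp_pos _).le
  have hS'nn : 0 ≤ S' := Finset.sum_nonneg fun n _ => (exp_pos _).le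
  have hle : S' ≤ exp (M * ε) * S := by
    rw [Finset.mul_sum]
    apply Finset.sum_le_sum
    intro n _
    rw [← exp_add]
    apply exp_le_exp.mpr
    have : α n * ε ≤ M * ε := mul_le_mul_of_nonneg_right (hMub n) hε
    nlinarith
  have hsq : S' ^ 2 ≤ exp (2 * M * ε) * S ^ 2 := by
    have h2 : S' ^ 2 ≤ (exp (M * ε) * S) ^ 2 := by
      apply pow_le_pow_left₀ hS'nn hle
    calc S' ^ 2 ≤ (exp (M * ε) * S) ^ 2 := h2
      _ = exp (2 * M * ε) * S ^ 2 := by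
          rw [mul_pow, ← exp_nat_mul]
          ring_nf
  linarith
end

section
/- For the paired exponential utility U and ε ≥ 0, the negative part satisfies (U(x - ε𝟏))⁻ ≤ (exp(2 max_n αₙ ε) - 1)·N²/2 + exp(2 max_n αₙ ε)·(U(x))⁻ for all x ∈ ℝᴺ. Consequently, if Z is an ℝᴺ-valued random vector with (U(Z))⁻ integrable, then (U(Z - ε𝟏))⁻ is integrable for all ε ≥ 0. -/
open Real Finset MeasureTheory

theorem paired_exp_utility_negpart_bound {Ω : Type*} [MeasurableSpace Ω]
    (μ : Measure Ω) [IsProbabilityMeasure μ]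
    (N : ℕ) (hN : 1 ≤ N)
    (α : Fin N → ℝ) (hα : ∀ n, 0 < α n)
    (U : (Fin N → ℝ) → ℝ)
    (hU : ∀ x, U x = (N : ℝ)^2 / 2 - (1/2) * (∑ n, exp (-(α n * x n)))^2)
    (M : ℝ) (hMub : ∀ n, α n ≤ M) (hMmem : ∃ n, α n = M) :
    (∀ ε : ℝ, 0 ≤ ε → ∀ x : Fin N → ℝ,
      max (-(U (fun n => x n - ε))) 0
        ≤ (exp (2 * M * ε) - 1) * (N : ℝ)^2 / 2
            + exp (2 * M * ε) * max (-(U x)) 0) ∧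
    (∀ Z : Ω → Fin N → ℝ, Measurable Z →
      Integrable (fun ω => max (-(U (Z ω))) 0) μ →
      ∀ ε : ℝ, 0 ≤ ε →
        Integrable (fun ω => max (-(U (fun n => Z ω n - ε))) 0) μ) := by
  have hM : 0 < M := lt_of_lt_of_le (hα ⟨0, hN⟩) (hMub ⟨0, hN⟩)
  have key : ∀ ε : ℝ, 0 ≤ ε → ∀ x : Fin N → ℝ,
      max (-(U (fun n => x n - ε))) 0
        ≤ (exp (2 * M * ε) - 1) * (N : ℝ)^2 / 2
            + exp (2 * M * ε) * max (-(U x)) 0 := by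
    intro ε hε x
    set E := exp (2 * M * ε) with hE
    have hE1 : 1 ≤ E := by
      rw [hE]; apply Real.one_le_exp; positivity
    set S := ∑ n, exp (-(α n * x n)) with hS
    have hS0 : 0 ≤ S := Finset.sum_nonneg fun n _ => (Real.exp_pos _).le
    set T := ∑ n, exp (-(α n * (x n - ε))) with hT
    have hT0 : 0 ≤ T := Finset.sum_nonneg fun n _ => (Real.exp_pos _).le
    have hsum : T ≤ exp (M * ε) * S := by
      rw [hT, hS, Finset.mul_sum]
      apply Finset.sum_le_sum
      intro n _
      rw [← Real.exp_add]
      apply Real.exp_le_exp.2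
      nlinarith [hMub n, (hα n).le]
    have hsq : T ^ 2 ≤ E * S ^ 2 := by
      have h1 : T ^ 2 ≤ (exp (M * ε) * S) ^ 2 :=
        pow_le_pow_left₀ hT0 hsum 2
      have h2 : (exp (M * ε) * S) ^ 2 = E * S ^ 2 := by
        rw [mul_pow, hE, sq, ← Real.exp_add]
        ring_nf
      linarith [h1, h2.le, h2.ge]
    have hm : -(U x) ≤ max (-(U x)) 0 := le_max_left _ _
    have hm0 : (0:ℝ) ≤ max (-(U x)) 0 := le_max_right _ _
    have hU2 := hU x
    have hU1 := hU (fun n => x n - ε)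
    rw [← hS] at hU2
    rw [← hT] at hU1
    apply max_le
    · rw [hU1]
      nlinarith [hsq, hm, hm0, hE1, hU2]
    · nlinarith [hE1, hm0, sq_nonneg (N:ℝ)]
  refine ⟨key, ?_⟩
  intro Z hZ hint ε hε
  apply Integrable.mono'
    ((integrable_const ((exp (2 * M * ε) - 1) * (N : ℝ)^2 / 2)).add
      (hint.const_mul (exp (2 * M * ε))))
  · have hmeas : Measurable fun ω =>
        max (-(U (fun n => Z ω n - ε))) 0 := by
      simp only [hU]
      have h1 : ∀ n : Fin N, Measurable fun ω => Z ω n :=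
        fun n => (measurable_pi_apply n).comp hZ
      have h2 : Measurable fun ω => ∑ n, exp (-(α n * (Z ω n - ε))) :=
        Finset.measurable_sum _ fun n _ =>
          Real.measurable_exp.comp ((((h1 n).sub_const ε).const_mul (α n)).neg)
      exact ((measurable_const.sub ((h2.pow_const 2).const_mul (1/2))).neg).max
        measurable_const
    exact hmeas.aestronglyMeasurable
  · filter_upwards with ω
    rw [Real.norm_eq_abs, abs_of_nonneg (le_max_right _ _)]
    exact key ε hε (Z ω)
end

section
/- With the paired exponential utility U, X ∈ (L^∞)ᴺ, S = ∑ⱼ Xʲ, β = ∑ⱼ 1/αⱼ, B < N²/2, d := (β/2)log((β²/(N²-2B)) E[exp(-2S/β)]), and Ŷⁿ := -Xⁿ + (1/(βαₙ))(S + d) - (1/αₙ)log(1/αₙ), the budget constraint is saturated: E[U(X + Ŷ)] = B. -/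
open Real Finset MeasureTheory

/-!
At `X + Ŷ` every coordinate satisfies `αₙ (Xⁿ + Ŷⁿ) = (S + d)/β + log αₙ`, so
`∑ₙ exp(-αₙ(Xⁿ + Ŷⁿ)) = β exp(-(S + d)/β)` and
`U(X + Ŷ) = N²/2 - (β²/2) exp(-2d/β) exp(-2S/β)`.
The constant `d` is chosen exactly so that `β² exp(-2d/β) E[exp(-2S/β)] = N² - 2B`,
which makes the expected utility equal to `B`.
-/

lemma sum_exp_neg_mul_eq_exp_neg_div_mul_sum_inv {ι : Type*} [Fintype ι] {α : ι → ℝ}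
    (hα : ∀ n, 0 < α n) (β s : ℝ) :
    ∑ n, exp (-(α n * ((1 / (β * α n)) * s - (1 / α n) * log (1 / α n))))
      = exp (-(s / β)) * ∑ n, 1 / α n := by
  rw [mul_sum]
  refine sum_congr rfl fun n _ => ?_
  have hαn : α n ≠ 0 := (hα n).ne'
  have harg : α n * ((1 / (β * α n)) * s - (1 / α n) * log (1 / α n))
      = s / β - log (1 / α n) := by
    field_simp
  rw [harg, neg_sub, exp_sub, exp_log (one_div_pos.mpr (hα n)), exp_neg]
  ring

lemma integrable_exp_mul_sum_of_abs_le {Ω ι : Type*} [MeasurableSpace Ω] [Fintype ι]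
    {μ : Measure Ω} [IsFiniteMeasure μ] {X : Ω → ι → ℝ} (hXm : Measurable X) {C : ℝ}
    (hXb : ∀ ω n, |X ω n| ≤ C) (t : ℝ) :
    Integrable (fun ω => exp (t * ∑ j, X ω j)) μ := by
  have hsum : ∀ ω, |∑ j, X ω j| ≤ Fintype.card ι * C := fun ω =>
    (abs_sum_le_sum_abs _ _).trans (by simpa using sum_le_sum fun j (_ : j ∈ univ) => hXb ω j)
  refine .of_bound (by fun_prop) (exp (|t| * (Fintype.card ι * C))) (.of_forall fun ω => ?_)
  rw [norm_of_nonneg (exp_pos _).le, exp_le_exp]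
  calc t * ∑ j, X ω j ≤ |t * ∑ j, X ω j| := le_abs_self _
    _ = |t| * |∑ j, X ω j| := abs_mul _ _
    _ ≤ |t| * (Fintype.card ι * C) := mul_le_mul_of_nonneg_left (hsum ω) (abs_nonneg t)

lemma exp_neg_two_mul_half_mul_log_div {β K : ℝ} (hβ : β ≠ 0) (hK : 0 < K) :
    exp (-(2 * (β / 2 * log K)) / β) = K⁻¹ := by
  rw [← exp_log hK, ← exp_neg, log_exp]
  congr 1
  field_simp

theorem paired_exp_primal_budget_saturated {Ω : Type*} [MeasurableSpace Ω]
    (μ : Measure Ω) [IsProbabilityMeasure μ]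
    (N : ℕ) (hN : 1 ≤ N)
    (α : Fin N → ℝ) (hα : ∀ n, 0 < α n)
    (U : (Fin N → ℝ) → ℝ)
    (hU : ∀ x, U x = (N : ℝ)^2 / 2 - (1/2) * (∑ n, exp (-(α n * x n)))^2)
    (β : ℝ) (hβ : β = ∑ j, 1 / α j)
    (B : ℝ) (hB : B < (N : ℝ)^2 / 2)
    (X : Ω → Fin N → ℝ) (hXm : Measurable X)
    (C : ℝ) (hXb : ∀ ω n, |X ω n| ≤ C)
    (S : Ω → ℝ) (hS : ∀ ω, S ω = ∑ j, X ω j)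
    (d : ℝ)
    (hd : d = (β / 2) * log ((β^2 / ((N : ℝ)^2 - 2 * B)) *
      ∫ ω, exp (-(2 * S ω) / β) ∂μ))
    (Y : Ω → Fin N → ℝ)
    (hY : ∀ ω n, Y ω n = -X ω n + (1 / (β * α n)) * (S ω + d)
      - (1 / α n) * log (1 / α n)) :
    ∫ ω, U (fun n => X ω n + Y ω n) ∂μ = B := by
  have hβpos : 0 < β := by
    have : Nonempty (Fin N) := Fin.pos_iff_nonempty.mp hN
    exact hβ ▸ sum_pos (fun j _ => one_div_pos.mpr (hα j)) univ_nonempty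
  have hint : Integrable (fun ω => exp (-(2 * S ω) / β)) μ := by
    convert integrable_exp_mul_sum_of_abs_le (μ := μ) hXm hXb (-2 / β) using 3 with ω
    rw [hS]
    ring
  set I := ∫ ω, exp (-(2 * S ω) / β) ∂μ with hI
  have hIpos : 0 < I := integral_exp_pos hint
  have hK : 0 < β^2 / ((N : ℝ)^2 - 2 * B) * I :=
    mul_pos (div_pos (by positivity) (by linarith)) hIpos
  have hUXY : ∀ ω, U (fun n => X ω n + Y ω n)
      = (N : ℝ)^2 / 2 - β^2 / 2 * exp (-(2 * d) / β) * exp (-(2 * S ω) / β) := fun ω => by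
    have hXY : (fun n => X ω n + Y ω n)
        = fun n => (1 / (β * α n)) * (S ω + d) - (1 / α n) * log (1 / α n) := by
      funext n; rw [hY]; ring
    have hexponent : ((2 : ℕ) : ℝ) * -((S ω + d) / β) = -(2 * d) / β + -(2 * S ω) / β := by
      push_cast
      ring
    rw [hXY, hU, sum_exp_neg_mul_eq_exp_neg_div_mul_sum_inv hα, ← hβ, mul_pow, ← exp_nat_mul,
      hexponent, exp_add]
    ring
  have hexp : exp (-(2 * d) / β) = (β^2 / ((N : ℝ)^2 - 2 * B) * I)⁻¹ :=
    hd ▸ exp_neg_two_mul_half_mul_log_div hβpos.ne' hK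
  simp_rw [hUXY]
  rw [integral_sub (integrable_const _) (hint.const_mul _), integral_const, integral_const_mul,
    probReal_univ, ← hI, hexp]
  field_simp [hIpos.ne']
  ring
end

section
/- For any random vector X ∈ (L^∞)ᴺ and probability measures Q ≪ P, B < N²/2 with the paired exponential utility, the penalty function satisfies the Fenchel bound: for λ̂ := (N²-2B)/β > 0, sup{∑ₙ E_Q[-Zⁿ] : Z ∈ (L^∞)ᴺ, E[U(Z)] ≥ B} ≤ (1/λ̂)(-B + E[V(λ̂ (dQ/dP), …, λ̂ (dQ/dP))]), where V is the convex conjugate of U. -/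
open Real Finset MeasureTheory

theorem paired_exp_penalty_fenchel_bound {Ω : Type*} [MeasurableSpace Ω]
    (μ : Measure Ω) [IsProbabilityMeasure μ]
    (N : ℕ) (hN : 1 ≤ N)
    (α : Fin N → ℝ) (hα : ∀ n, 0 < α n)
    (β : ℝ) (hβ : β = ∑ j, 1 / α j)
    (U : (Fin N → ℝ) → ℝ)
    (hU : ∀ x, U x = (N : ℝ)^2 / 2 - (1/2) * (∑ n, exp (-(α n * x n)))^2)
    (V : (Fin N → ℝ) → ℝ)
    (hV : ∀ w, V w = ⨆ x : Fin N → ℝ, (U x - ∑ j, x j * w j))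
    (B : ℝ) (hB : B < (N : ℝ)^2 / 2)
    (lam : ℝ) (hlam : lam = ((N : ℝ)^2 - 2 * B) / β)
    (D : Ω → ℝ) (hDm : Measurable D) (hD0 : ∀ ω, 0 ≤ D ω)
    (K : ℝ) (hDb : ∀ ω, D ω ≤ K) (hD1 : ∫ ω, D ω ∂μ = 1)
    (hVint : Integrable (fun ω => V (fun _ => lam * D ω)) μ)
    (Z : Ω → Fin N → ℝ) (hZm : Measurable Z)
    (CZ : ℝ) (hZb : ∀ ω n, |Z ω n| ≤ CZ)
    (hZB : B ≤ ∫ ω, U (Z ω) ∂μ) :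
    ∑ n, ∫ ω, (-(Z ω n)) * D ω ∂μ
      ≤ (1 / lam) * (-B + ∫ ω, V (fun _ => lam * D ω) ∂μ) := by
  haveI : Nonempty (Fin N) := Fin.pos_iff_nonempty.mp hN
  have hΩ : Nonempty Ω := by
    by_contra h
    have h0 : μ Set.univ = 0 := by
      rw [Set.univ_eq_empty_iff.mpr (not_nonempty_iff.mp h)]; simp
    rw [measure_univ] at h0
    exact one_ne_zero h0
  have hβpos : 0 < β := by
    rw [hβ]
    exact Finset.sum_pos (fun j _ => by have := hα j; positivity) Finset.univ_nonempty
  have hlampos : 0 < lam := by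
    rw [hlam]
    apply div_pos _ hβpos
    linarith
  obtain ⟨ω₀⟩ := hΩ
  have hCZ : 0 ≤ CZ := le_trans (abs_nonneg _) (hZb ω₀ (Classical.arbitrary (Fin N)))
  have hK : 0 ≤ K := le_trans (hD0 ω₀) (hDb ω₀)
  -- key pointwise bound on the conjugate expression
  have key : ∀ c0 : ℝ, 0 ≤ c0 → ∀ x : Fin N → ℝ,
      U x - ∑ j, x j * c0 ≤ (N : ℝ)^2/2 + (c0 * β)^2/2 := by
    intro c0 hc0 x
    rw [hU]
    set S := ∑ n, exp (-(α n * x n)) with hS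
    have hSnn : 0 ≤ S := Finset.sum_nonneg (fun n _ => (exp_pos _).le)
    have hterm : ∀ j : Fin N, -(x j * c0) ≤ c0 * β * exp (-(α j * x j)) := by
      intro j
      have h1 : -(α j * x j) ≤ exp (-(α j * x j)) := by
        have := Real.add_one_le_exp (-(α j * x j)); linarith
      have hβj : 1 / α j ≤ β := by
        rw [hβ]
        exact Finset.single_le_sum (f := fun i => 1 / α i) (fun i _ => by have := hα i; positivity)
          (Finset.mem_univ j)
      have h3 : -(x j) ≤ (1 / α j) * exp (-(α j * x j)) := by
        rw [div_mul_eq_mul_div, le_div_iff₀ (hα j)]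
        nlinarith [hα j]
      have h2 : -(x j) ≤ β * exp (-(α j * x j)) :=
        h3.trans (mul_le_mul_of_nonneg_right hβj (exp_pos _).le)
      calc -(x j * c0) = c0 * (-(x j)) := by ring
        _ ≤ c0 * (β * exp (-(α j * x j))) := mul_le_mul_of_nonneg_left h2 hc0
        _ = c0 * β * exp (-(α j * x j)) := by ring
    have hsum : -(∑ j, x j * c0) ≤ c0 * β * S := by
      calc -(∑ j, x j * c0) = ∑ j, -(x j * c0) := by
            rw [← Finset.sum_neg_distrib]
        _ ≤ ∑ j, c0 * β * exp (-(α j * x j)) :=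
            Finset.sum_le_sum (fun j _ => hterm j)
        _ = c0 * β * S := by rw [← Finset.mul_sum]
    nlinarith [sq_nonneg (S - c0 * β)]
  -- pointwise Fenchel inequality
  have hpt : ∀ ω, U (Z ω) - ∑ j, Z ω j * (lam * D ω) ≤ V (fun _ => lam * D ω) := by
    intro ω
    have hc0 : 0 ≤ lam * D ω := mul_nonneg hlampos.le (hD0 ω)
    rw [hV]
    have hbdd : BddAbove (Set.range fun x : Fin N → ℝ =>
        U x - ∑ j, x j * (fun _ : Fin N => lam * D ω) j) := by
      refine ⟨(N : ℝ)^2/2 + (lam * D ω * β)^2/2, ?_⟩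
      rintro y ⟨x, rfl⟩
      exact key _ hc0 x
    exact le_ciSup hbdd (Z ω)
  -- integrability of components
  have hZnm : ∀ n, Measurable (fun ω => Z ω n) :=
    fun n => (measurable_pi_apply n).comp hZm
  have hZD_int : ∀ n : Fin N, Integrable (fun ω => Z ω n * D ω) μ := by
    intro n
    refine Integrable.mono' (integrable_const (CZ * K))
      ((hZnm n).mul hDm).aestronglyMeasurable (ae_of_all _ fun ω => ?_)
    rw [Real.norm_eq_abs, abs_mul]
    have hDa : |D ω| ≤ K := by rw [abs_of_nonneg (hD0 ω)]; exact hDb ω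
    exact mul_le_mul (hZb ω n) hDa (abs_nonneg _) hCZ
  have hUZeq : (fun ω => U (Z ω)) =
      fun ω => (N : ℝ)^2 / 2 - (1/2) * (∑ n, exp (-(α n * Z ω n)))^2 :=
    funext fun ω => hU (Z ω)
  have hUZ_int : Integrable (fun ω => U (Z ω)) μ := by
    rw [hUZeq]
    have hm : Measurable fun ω => (N : ℝ)^2 / 2 - (1/2) * (∑ n, exp (-(α n * Z ω n)))^2 := by
      apply Measurable.sub measurable_const
      apply Measurable.mul measurable_const
      apply Measurable.pow _ measurable_const
      exact Finset.measurable_sum _ fun n _ =>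
        (Real.measurable_exp.comp (((hZnm n).const_mul (α n)).neg))
    refine Integrable.mono' (integrable_const ((N : ℝ)^2/2 + (1/2) * (∑ n, exp (α n * CZ))^2))
      hm.aestronglyMeasurable (ae_of_all _ fun ω => ?_)
    have hSb : ∑ n, exp (-(α n * Z ω n)) ≤ ∑ n, exp (α n * CZ) := by
      apply Finset.sum_le_sum
      intro n _
      apply Real.exp_le_exp.mpr
      have h1 : |Z ω n| ≤ CZ := hZb ω n
      have h2 := (abs_le.mp h1).1
      nlinarith [hα n]
    have hSnn : (0:ℝ) ≤ ∑ n, exp (-(α n * Z ω n)) :=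
      Finset.sum_nonneg (fun n _ => (exp_pos _).le)
    have hMnn : (0:ℝ) ≤ ∑ n, exp (α n * CZ) :=
      Finset.sum_nonneg (fun n _ => (exp_pos _).le)
    rw [Real.norm_eq_abs, abs_sub_comm, abs_le]
    constructor <;> nlinarith [sq_nonneg (∑ n, exp (-(α n * Z ω n)))]
  have hsum_int : Integrable (fun ω => ∑ j, Z ω j * (lam * D ω)) μ := by
    have heq : (fun ω => ∑ j, Z ω j * (lam * D ω)) =
        fun ω => ∑ j, lam * (Z ω j * D ω) := by
      funext ω; exact Finset.sum_congr rfl fun j _ => by ring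
    rw [heq]
    exact integrable_finset_sum _ fun j _ => (hZD_int j).const_mul lam
  -- integrate the pointwise inequality
  have hineq : ∫ ω, (U (Z ω) - ∑ j, Z ω j * (lam * D ω)) ∂μ
      ≤ ∫ ω, V (fun _ => lam * D ω) ∂μ :=
    integral_mono (hUZ_int.sub hsum_int) hVint hpt
  rw [integral_sub hUZ_int hsum_int] at hineq
  have hsplit : ∫ ω, (∑ j, Z ω j * (lam * D ω)) ∂μ
      = lam * ∑ j, ∫ ω, Z ω j * D ω ∂μ := by
    have heq : (fun ω => ∑ j, Z ω j * (lam * D ω)) =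
        fun ω => ∑ j, lam * (Z ω j * D ω) := by
      funext ω; exact Finset.sum_congr rfl fun j _ => by ring
    rw [heq, integral_finset_sum _ fun j _ => (hZD_int j).const_mul lam]
    rw [Finset.mul_sum]
    exact Finset.sum_congr rfl fun j _ => integral_const_mul lam _
  rw [hsplit] at hineq
  have hLHS : ∑ n, ∫ ω, (-(Z ω n)) * D ω ∂μ = -∑ n, ∫ ω, Z ω n * D ω ∂μ := by
    rw [← Finset.sum_neg_distrib]
    refine Finset.sum_congr rfl fun n _ => ?_
    rw [← integral_neg]
    exact integral_congr_ae (ae_of_all _ fun ω => by ring)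
  rw [hLHS]
  set T := ∑ n, ∫ ω, Z ω n * D ω ∂μ
  set IV := ∫ ω, V (fun _ => lam * D ω) ∂μ
  rw [show (1/lam) * (-B + IV) = (-B + IV) / lam from by ring, le_div_iff₀ hlampos]
  nlinarith
end

section
/- In the paired exponential setting with C = C_ℝ and Q = (Q,…,Q) with Q ≪ P of bounded density, the penalty function equals α_B(Q) = (Γ - (β log β)/2) + (β/2) log λ̂ + (β/2) H(Q|P), where λ̂ = (N²-2B)/β, β = ∑ⱼ 1/αⱼ, Γ = ∑ⱼ (1/αⱼ)log(1/αⱼ), and H(Q|P) is the relative entropy. -/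
/-!
Write `S = ∑ₙ exp (-αₙ zₙ)`. Gibbs' inequality for the weights `1 / αₙ` gives
`∑ₙ -zₙ ≤ Γ - β log β + β log S`, and Young's inequality for `x log x` gives
`d log S² ≤ d log d + S² / κ - d + d log κ`. Integrating against the density `D` and using the
constraint `E[S²] ≤ κ := N² - 2B` bounds every admissible value by
`Γ - β log β + (β/2) log κ + (β/2) H(Q|P)`, which is the claimed formula since `λ̂ = κ / β`.
All of these inequalities are equalities for `exp (-αₙ Zₙ) = (1 / (αₙ β)) √(κ D)`. This `Z` is
unbounded where `D` vanishes, so it is taken for the densities `(D + t) / (1 + t)` instead, and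
`t → 0⁺` by dominated convergence.
-/

open Real Finset MeasureTheory Filter Topology

namespace Real

/-- Young's inequality for `x log x`, whose convex conjugate is `exp (y - 1)`. -/
lemma mul_log_le_mul_log_add_sub {d y : ℝ} (hd : 0 ≤ d) (hy : 0 < y) :
    d * log y ≤ d * log d + y - d := by
  rcases hd.eq_or_lt with rfl | hd
  · simpa using hy.le
  have h := mul_le_mul_of_nonneg_left (self_sub_one_le_mul_log (div_pos hd hy).le) hy.le
  rw [log_div hd.ne' hy.ne', mul_sub, ← mul_assoc, mul_div_cancel₀ d hy.ne', mul_one] at h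
  linarith

lemma sum_mul_log_le {ι : Type*} [Fintype ι] [Nonempty ι] {c w : ι → ℝ}
    (hc : ∀ i, 0 < c i) (hw : ∀ i, 0 < w i) :
    ∑ i, c i * log (w i) ≤
      ∑ i, c i * log (c i) - (∑ i, c i) * log (∑ i, c i) + (∑ i, c i) * log (∑ i, w i) := by
  set β := ∑ i, c i
  set σ := ∑ i, w i
  have hβ : 0 < β := sum_pos (fun i _ => hc i) univ_nonempty
  have hσ : 0 < σ := sum_pos (fun i _ => hw i) univ_nonempty
  have key : ∀ i, c i * log (w i) + c i * log β - c i * log σ ≤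
      c i * log (c i) + w i * (β / σ) - c i := fun i => by
    have := mul_log_le_mul_log_add_sub (hc i).le (mul_pos (hw i) (div_pos hβ hσ))
    rwa [log_mul (hw i).ne' (div_pos hβ hσ).ne', log_div hβ.ne' hσ.ne', mul_add, mul_sub,
      ← add_sub_assoc] at this
  have hsum := sum_le_sum fun i (_ : i ∈ univ) => key i
  simp only [sum_add_distrib, sum_sub_distrib, ← sum_mul] at hsum
  rw [mul_div_cancel₀ β hσ.ne'] at hsum
  linarith

lemma abs_mul_log_le_sq_add_one {x y : ℝ} (hx : 0 ≤ x) (hxy : x ≤ y) :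
    |x * log y| ≤ y ^ 2 + 1 := by
  rcases (hx.trans hxy).eq_or_lt with rfl | hy
  · simp [le_antisymm hxy hx]
  have hlog : |log y| ≤ y + y⁻¹ := by
    have h1 := log_le_sub_one_of_pos hy
    have h2 := log_le_sub_one_of_pos (inv_pos.mpr hy)
    rw [log_inv] at h2
    rw [abs_le]; constructor <;> linarith [inv_pos.mpr hy]
  calc |x * log y| = x * |log y| := by rw [abs_mul, abs_of_nonneg hx]
    _ ≤ y * (y + y⁻¹) := mul_le_mul hxy hlog (abs_nonneg _) hy.le
    _ = y ^ 2 + 1 := by field_simp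

lemma tendsto_mul_log_add_nhdsGT_zero {x : ℝ} (hx : 0 ≤ x) :
    Tendsto (fun t => x * log (x + t)) (𝓝[>] 0) (𝓝 (x * log x)) := by
  rcases hx.eq_or_lt with rfl | hx
  · simp
  apply tendsto_nhdsWithin_of_tendsto_nhds
  have : ContinuousAt (fun t => x * log (x + t)) 0 :=
    continuousAt_const.mul ((continuousAt_const.add continuousAt_id).log (by simpa using hx.ne'))
  simpa using this.tendsto

end Real

lemma csSup_eq_of_forall_le_of_tendsto {X γ : Type*} [ConditionallyCompleteLinearOrder X]
    [TopologicalSpace X] [OrderTopology X] {l : Filter γ} [l.NeBot] {S : Set X} {f : γ → X}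
    {v : X} (hub : ∀ r ∈ S, r ≤ v) (hf : Tendsto f l (𝓝 v)) (hS : ∀ᶠ x in l, f x ∈ S) :
    sSup S = v :=
  have hv := mem_closure_of_tendsto hf hS
  (isLUB_of_mem_closure hub hv).csSup_eq (closure_nonempty_iff.mp ⟨v, hv⟩)

section PairedExponential

variable {ι : Type*} [Fintype ι] {α : ι → ℝ} {β Γ : ℝ}

/-- The utility of the paper is `U z = N²/2 - (expSum α z)² / 2`. -/
noncomputable def expSum (α z : ι → ℝ) : ℝ := ∑ i, exp (-(α i * z i))

lemma continuous_expSum (α : ι → ℝ) : Continuous (expSum α) := by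
  unfold expSum; fun_prop

lemma expSum_pos [Nonempty ι] (α z : ι → ℝ) : 0 < expSum α z :=
  sum_pos (fun _ _ => exp_pos _) univ_nonempty

/-- For `β = ∑ i, 1 / α i`, the unique `z` with `expSum α z = s` attaining equality in
`sum_neg_le_of_expSum`. -/
noncomputable def expOptimizer (α : ι → ℝ) (β s : ℝ) (i : ι) : ℝ := -(log (1 / α i / β * s) / α i)

variable [Nonempty ι] (hα : ∀ i, 0 < α i) (hβ : β = ∑ i, 1 / α i)
include hα hβ

lemma pos_of_eq_sum_inv : 0 < β :=
  hβ ▸ sum_pos (fun i _ => one_div_pos.mpr (hα i)) univ_nonempty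

lemma sum_neg_le_of_expSum (hΓ : Γ = ∑ i, 1 / α i * log (1 / α i)) (z : ι → ℝ) :
    ∑ i, -z i ≤ Γ - β * log β + β * log (expSum α z) := by
  have h := sum_mul_log_le (fun i => one_div_pos.mpr (hα i)) (fun i => exp_pos (-(α i * z i)))
  have hz : ∀ i, 1 / α i * log (exp (-(α i * z i))) = -z i := fun i => by
    rw [log_exp]; field_simp [(hα i).ne']
  simp only [hz] at h
  rwa [← hβ, ← hΓ] at h

lemma expSum_expOptimizer {s : ℝ} (hs : 0 < s) : expSum α (expOptimizer α β s) = s := by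
  have hβ0 := pos_of_eq_sum_inv hα hβ
  have h : ∀ i, exp (-(α i * expOptimizer α β s i)) = 1 / α i / β * s := fun i => by
    rw [expOptimizer, mul_neg, neg_neg, mul_div_cancel₀ _ (hα i).ne',
      exp_log (by have := hα i; positivity)]
  simp only [expSum, h, ← sum_mul, ← sum_div, ← hβ, div_self hβ0.ne', one_mul]

lemma sum_neg_expOptimizer (hΓ : Γ = ∑ i, 1 / α i * log (1 / α i)) {s : ℝ} (hs : 0 < s) :
    ∑ i, -expOptimizer α β s i = Γ - β * log β + β * log s := by
  have hβ0 := pos_of_eq_sum_inv hα hβ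
  have h : ∀ i, -expOptimizer α β s i =
      1 / α i * log (1 / α i) - 1 / α i * log β + 1 / α i * log s := fun i => by
    have := hα i
    rw [expOptimizer, neg_neg, log_mul (by positivity) hs.ne', log_div (by positivity) hβ0.ne']
    ring
  simp only [h, sum_add_distrib, sum_sub_distrib, ← sum_mul, ← hβ, ← hΓ]

/-- The pointwise inequality behind the upper bound: Gibbs' inequality in the exposures, then
Young's inequality between the density `d` and `expSum α z ^ 2 / κ`. -/
lemma sum_neg_mul_le (hΓ : Γ = ∑ i, 1 / α i * log (1 / α i)) (z : ι → ℝ) {d κ : ℝ}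
    (hd : 0 ≤ d) (hκ : 0 < κ) :
    (∑ i, -z i) * d ≤ (Γ - β * log β + β / 2 * log κ - β / 2) * d
      + β / (2 * κ) * expSum α z ^ 2 + β / 2 * (d * log d) := by
  have hβ0 := pos_of_eq_sum_inv hα hβ
  have hS := expSum_pos α z
  have hGibbs := mul_le_mul_of_nonneg_right (sum_neg_le_of_expSum hα hβ hΓ z) hd
  have hYoung := mul_log_le_mul_log_add_sub hd (div_pos (pow_pos hS 2) hκ)
  rw [log_div (by positivity) hκ.ne', log_pow] at hYoung
  have := mul_le_mul_of_nonneg_left hYoung (half_pos hβ0).le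
  have hκS : β / (2 * κ) * expSum α z ^ 2 = β / 2 * (expSum α z ^ 2 / κ) := by ring
  push_cast at this
  linarith

end PairedExponential

section Integrals

variable {Ω : Type*} {ι : Type*} [Fintype ι]

lemma exists_norm_comp_le_of_abs_le {E : Type*} [NormedAddCommGroup E] {f : (ι → ℝ) → E}
    (hf : Continuous f) {Z : Ω → ι → ℝ} {C : ℝ} (hC : ∀ ω i, |Z ω i| ≤ C) :
    ∃ M, ∀ ω, ‖f (Z ω)‖ ≤ M := by
  obtain ⟨M, hM⟩ :=
    (isCompact_closedBall (0 : ι → ℝ) (max C 0)).exists_bound_of_continuousOn hf.continuousOn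
  refine ⟨M, fun ω => hM _ ?_⟩
  rw [mem_closedBall_zero_iff, pi_norm_le_iff_of_nonneg (le_max_right _ _)]
  exact fun i => (hC ω i).trans (le_max_left _ _)

variable [MeasurableSpace Ω] {μ : Measure Ω} {D : Ω → ℝ}

lemma integrable_comp_mul_of_abs_le {f : (ι → ℝ) → ℝ} (hf : Continuous f) {Z : Ω → ι → ℝ}
    (hZ : Measurable Z) {C : ℝ} (hC : ∀ ω i, |Z ω i| ≤ C) (hD : Integrable D μ) :
    Integrable (fun ω => f (Z ω) * D ω) μ :=
  have ⟨_, hM⟩ := exists_norm_comp_le_of_abs_le hf hC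
  hD.bdd_mul (hf.measurable.comp hZ).aestronglyMeasurable (ae_of_all _ hM)

lemma integrable_comp_of_abs_le [IsFiniteMeasure μ] {f : (ι → ℝ) → ℝ} (hf : Continuous f)
    {Z : Ω → ι → ℝ} (hZ : Measurable Z) {C : ℝ} (hC : ∀ ω i, |Z ω i| ≤ C) :
    Integrable (fun ω => f (Z ω)) μ :=
  have ⟨M, hM⟩ := exists_norm_comp_le_of_abs_le hf hC
  .of_bound (hf.measurable.comp hZ).aestronglyMeasurable M (ae_of_all _ hM)

lemma sum_integral_neg_mul_eq {Z : Ω → ι → ℝ} (hZ : Measurable Z) {C : ℝ}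
    (hC : ∀ ω i, |Z ω i| ≤ C) (hD : Integrable D μ) :
    ∑ i, ∫ ω, -Z ω i * D ω ∂μ = ∫ ω, (∑ i, -Z ω i) * D ω ∂μ := by
  rw [← integral_finsetSum _ fun i _ =>
    integrable_comp_mul_of_abs_le (f := fun z => -z i) (by fun_prop) hZ hC hD]
  simp_rw [sum_mul]

variable [IsFiniteMeasure μ] {K : ℝ}

lemma integrable_of_nonneg_of_le (hDm : Measurable D) (hD0 : ∀ ω, 0 ≤ D ω) (hDb : ∀ ω, D ω ≤ K) :
    Integrable D μ :=
  .of_bound hDm.aestronglyMeasurable K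
    (ae_of_all _ fun ω => (norm_of_nonneg (hD0 ω)).trans_le (hDb ω))

lemma integrable_mul_log_add (hDm : Measurable D) (hD0 : ∀ ω, 0 ≤ D ω) (hDb : ∀ ω, D ω ≤ K)
    {t : ℝ} (ht : 0 ≤ t) : Integrable (fun ω => D ω * log (D ω + t)) μ := by
  refine .of_bound (by fun_prop) ((K + t) ^ 2 + 1) (ae_of_all _ fun ω => ?_)
  have hDt : D ω ≤ D ω + t := le_add_of_nonneg_right ht
  refine (abs_mul_log_le_sq_add_one (hD0 ω) hDt).trans ?_
  gcongr <;> linarith [hD0 ω, hDb ω]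

lemma tendsto_integral_mul_log_add_sub_log (hDm : Measurable D) (hD0 : ∀ ω, 0 ≤ D ω)
    (hDb : ∀ ω, D ω ≤ K) :
    Tendsto (fun t => ∫ ω, D ω * log (D ω + t) ∂μ - log (1 + t)) (𝓝[>] 0)
      (𝓝 (∫ ω, D ω * log (D ω) ∂μ)) := by
  have hlog : ContinuousAt (fun t : ℝ => log (1 + t)) 0 :=
    (continuousAt_const.add continuousAt_id).log (by norm_num)
  have hint := tendsto_integral_filter_of_dominated_convergence (μ := μ)
    (fun _ => (K + 1) ^ 2 + 1) (Eventually.of_forall fun t => by fun_prop) ?_ (integrable_const _)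
    (ae_of_all _ fun ω => tendsto_mul_log_add_nhdsGT_zero (hD0 ω))
  · simpa using hint.sub (hlog.tendsto.mono_left nhdsWithin_le_nhds)
  filter_upwards [Ioo_mem_nhdsGT one_pos] with t ht
  refine ae_of_all _ fun ω => ?_
  have hDt : D ω ≤ D ω + t := le_add_of_nonneg_right ht.1.le
  refine (abs_mul_log_le_sq_add_one (hD0 ω) hDt).trans ?_
  gcongr <;> linarith [hD0 ω, hDb ω, ht.1, ht.2]

end Integrals

section Penalty

variable {Ω : Type*} [MeasurableSpace Ω] {μ : Measure Ω} [IsProbabilityMeasure μ]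
  {ι : Type*} [Fintype ι] {α : ι → ℝ} {β Γ : ℝ} {D : Ω → ℝ} {K : ℝ}

lemma integral_sub_half_mul_expSum_sq (c : ℝ) {Z : Ω → ι → ℝ} (hZ : Measurable Z) {C : ℝ}
    (hC : ∀ ω i, |Z ω i| ≤ C) :
    ∫ ω, (c - 1 / 2 * expSum α (Z ω) ^ 2) ∂μ = c - 1 / 2 * ∫ ω, expSum α (Z ω) ^ 2 ∂μ := by
  rw [integral_sub (integrable_const _) ((integrable_comp_of_abs_le
    (f := fun z => expSum α z ^ 2) ((continuous_expSum α).pow 2) hZ hC).const_mul _),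
    integral_const, probReal_univ, one_smul, integral_const_mul]

variable [Nonempty ι] (hα : ∀ i, 0 < α i) (hβ : β = ∑ i, 1 / α i)
  (hΓ : Γ = ∑ i, 1 / α i * log (1 / α i))
  (hDm : Measurable D) (hD0 : ∀ ω, 0 ≤ D ω) (hDb : ∀ ω, D ω ≤ K) (hD1 : ∫ ω, D ω ∂μ = 1)
include hα hβ hΓ hDm hD0 hDb hD1

lemma sum_integral_neg_mul_le {κ : ℝ} (hκ : 0 < κ) {Z : Ω → ι → ℝ} (hZ : Measurable Z) {C : ℝ}
    (hC : ∀ ω i, |Z ω i| ≤ C) (hZκ : ∫ ω, expSum α (Z ω) ^ 2 ∂μ ≤ κ) :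
    ∑ i, ∫ ω, -Z ω i * D ω ∂μ ≤
      Γ - β * log β + β / 2 * log κ + β / 2 * ∫ ω, D ω * log (D ω) ∂μ := by
  have hβ0 := pos_of_eq_sum_inv hα hβ
  have hD := integrable_of_nonneg_of_le (μ := μ) hDm hD0 hDb
  have hS := integrable_comp_of_abs_le (μ := μ) (f := fun z => expSum α z ^ 2)
    ((continuous_expSum α).pow 2) hZ hC
  have hH : Integrable (fun ω => D ω * log (D ω)) μ := by
    simpa using integrable_mul_log_add (μ := μ) hDm hD0 hDb le_rfl
  set a := Γ - β * log β + β / 2 * log κ - β / 2 with ha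
  have hDS : Integrable (fun ω => a * D ω + β / (2 * κ) * expSum α (Z ω) ^ 2) μ :=
    (hD.const_mul a).add (hS.const_mul _)
  have hκ2 : β / (2 * κ) * κ = β / 2 := by field_simp
  calc ∑ i, ∫ ω, -Z ω i * D ω ∂μ = ∫ ω, (∑ i, -Z ω i) * D ω ∂μ :=
        sum_integral_neg_mul_eq hZ hC hD
    _ ≤ ∫ ω, (a * D ω + β / (2 * κ) * expSum α (Z ω) ^ 2 + β / 2 * (D ω * log (D ω))) ∂μ :=
        integral_mono
          (integrable_comp_mul_of_abs_le (f := fun z => ∑ i, -z i) (by fun_prop) hZ hC hD)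
          (hDS.add (hH.const_mul _)) fun ω => sum_neg_mul_le hα hβ hΓ (Z ω) (hD0 ω) hκ
    _ = a + β / (2 * κ) * ∫ ω, expSum α (Z ω) ^ 2 ∂μ + β / 2 * ∫ ω, D ω * log (D ω) ∂μ := by
        rw [integral_add hDS (hH.const_mul _), integral_add (hD.const_mul a) (hS.const_mul _),
          integral_const_mul, integral_const_mul, integral_const_mul, hD1, mul_one]
    _ ≤ _ := by
        rw [ha]
        linarith [mul_le_mul_of_nonneg_left hZκ (by positivity : 0 ≤ β / (2 * κ))]

lemma exists_sum_integral_neg_mul_eq {κ : ℝ} (hκ : 0 < κ) {t : ℝ} (ht : 0 < t) :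
    ∃ Z : Ω → ι → ℝ, Measurable Z ∧ (∃ C, ∀ ω i, |Z ω i| ≤ C) ∧
      ∫ ω, expSum α (Z ω) ^ 2 ∂μ = κ ∧
      ∑ i, ∫ ω, -Z ω i * D ω ∂μ =
        Γ - β * log β + β / 2 * log κ
          + β / 2 * (∫ ω, D ω * log (D ω + t) ∂μ - log (1 + t)) := by
  have hβ0 := pos_of_eq_sum_inv hα hβ
  have hD := integrable_of_nonneg_of_le (μ := μ) hDm hD0 hDb
  set s : ℝ → ℝ := fun x => √(κ * (x + t) / (1 + t)) with hs_def
  have hs : ∀ x, 0 ≤ x → 0 < s x := fun x hx => by simp only [hs_def]; positivity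
  set F : ℝ → ι → ℝ := fun x => expOptimizer α β (s x) with hF_def
  have hFc : ContinuousOn F (Set.Icc 0 K) := by
    refine continuousOn_pi.mpr fun i => ?_
    simp only [hF_def, hs_def, expOptimizer]
    refine ((ContinuousOn.log (by fun_prop) fun x hx => ?_).div_const _).neg
    have := hα i
    have := hs x hx.1
    positivity
  have hFm : Measurable F := by
    refine measurable_pi_lambda _ fun i => ?_
    simp only [hF_def, hs_def, expOptimizer]
    fun_prop
  obtain ⟨C, hC⟩ := isCompact_Icc.exists_bound_of_continuousOn hFc
  have hZC : ∀ ω i, |F (D ω) i| ≤ C := fun ω i =>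
    (norm_le_pi_norm (F (D ω)) i).trans (hC _ ⟨hD0 ω, hDb ω⟩)
  refine ⟨fun ω => F (D ω), hFm.comp hDm, ⟨C, hZC⟩, ?_, ?_⟩
  · have hS : ∀ ω, expSum α (F (D ω)) ^ 2 = κ / (1 + t) * (D ω + t) := fun ω => by
      rw [hF_def, expSum_expOptimizer hα hβ (hs _ (hD0 ω)), hs_def,
        sq_sqrt (by have := hD0 ω; positivity)]
      ring
    simp only [hS]
    rw [integral_const_mul, integral_add hD (integrable_const t), hD1, integral_const,
      probReal_univ, one_smul]
    field_simp
  · have hsum : ∀ ω, (∑ i, -F (D ω) i) * D ω = (Γ - β * log β + β / 2 * (log κ - log (1 + t)))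
        * D ω + β / 2 * (D ω * log (D ω + t)) := fun ω => by
      have := hD0 ω
      rw [hF_def, sum_neg_expOptimizer hα hβ hΓ (hs _ this), hs_def,
        log_sqrt (by positivity), log_div (by positivity) (by positivity),
        log_mul hκ.ne' (by positivity)]
      ring
    rw [sum_integral_neg_mul_eq (Z := fun ω => F (D ω)) (hFm.comp hDm) hZC hD]
    simp only [hsum]
    rw [integral_add (hD.const_mul _) ((integrable_mul_log_add hDm hD0 hDb ht.le).const_mul _),
      integral_const_mul, integral_const_mul, hD1]
    ring

end Penalty

theorem paired_exp_penalty_formula {Ω : Type*} [MeasurableSpace Ω]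
    (μ : Measure Ω) [IsProbabilityMeasure μ]
    (N : ℕ) (hN : 1 ≤ N)
    (α : Fin N → ℝ) (hα : ∀ n, 0 < α n)
    (U : (Fin N → ℝ) → ℝ)
    (hU : ∀ x, U x = (N : ℝ)^2 / 2 - (1/2) * (∑ n, exp (-(α n * x n)))^2)
    (β Γ : ℝ) (hβ : β = ∑ j, 1 / α j) (hΓ : Γ = ∑ j, (1 / α j) * log (1 / α j))
    (B : ℝ) (hB : B < (N : ℝ)^2 / 2)
    (lam : ℝ) (hlam : lam = ((N : ℝ)^2 - 2 * B) / β)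
    (D : Ω → ℝ) (hDm : Measurable D) (hD0 : ∀ ω, 0 ≤ D ω)
    (K : ℝ) (hDb : ∀ ω, D ω ≤ K) (hD1 : ∫ ω, D ω ∂μ = 1) :
    sSup {r : ℝ | ∃ Z : Ω → Fin N → ℝ, Measurable Z ∧
        (∃ C : ℝ, ∀ ω n, |Z ω n| ≤ C) ∧
        B ≤ ∫ ω, U (Z ω) ∂μ ∧
        r = ∑ n, ∫ ω, (-(Z ω n)) * D ω ∂μ}
      = (Γ - (β * log β) / 2) + (β / 2) * log lam
          + (β / 2) * ∫ ω, D ω * log (D ω) ∂μ := by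
  have : Nonempty (Fin N) := ⟨⟨0, hN⟩⟩
  have hκ : 0 < (N : ℝ) ^ 2 - 2 * B := by linarith
  simp only [show ∀ x, U x = (N : ℝ) ^ 2 / 2 - 1 / 2 * expSum α x ^ 2 from hU]
  rw [show (Γ - (β * log β) / 2) + (β / 2) * log lam
      = Γ - β * log β + β / 2 * log ((N : ℝ) ^ 2 - 2 * B) by
    rw [hlam, log_div hκ.ne' (pos_of_eq_sum_inv hα hβ).ne']; ring]
  refine csSup_eq_of_forall_le_of_tendsto ?_ (((tendsto_integral_mul_log_add_sub_log
    hDm hD0 hDb).const_mul (β / 2)).const_add _) (eventually_mem_nhdsWithin.mono fun t ht => ?_)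
  · rintro r ⟨Z, hZ, ⟨C, hC⟩, hBZ, rfl⟩
    rw [integral_sub_half_mul_expSum_sq _ hZ hC] at hBZ
    exact sum_integral_neg_mul_le hα hβ hΓ hDm hD0 hDb hD1 hκ hZ hC (by linarith)
  · obtain ⟨Z, hZ, ⟨C, hC⟩, hZκ, hval⟩ :=
      exists_sum_integral_neg_mul_eq hα hβ hΓ hDm hD0 hDb hD1 hκ ht
    refine ⟨Z, hZ, ⟨C, hC⟩, ?_, hval.symm⟩
    rw [integral_sub_half_mul_expSum_sq _ hZ hC, hZκ]
    linarith
end
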